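/- arXiv:2403.11359 — 3 statements merged into one kernel-verified Lean document; each statement's English description precedes it below -/
import Mathlib

section
/- For every n ≥ 1, the number of Dyck words of semilength n with at most two peaks is equal to the number of permutations of {1,…,n} that avoid both patterns 132 and 321. -/
/-- A Dyck word of semilength `n`, as a list of booleans read left to right,
where `true` is an up-step `U` and `false` is a down-step `D`:
exactly `n` of each letter, and every prefix has at least as many `U`'s as `D`'s. -/
def IsDyckWord (n : ℕ) (w : List Bool) : Prop :=
  w.count true = n ∧ w.count false = n ∧
    ∀ k : ℕ, (w.take k).count false ≤ (w.take k).count true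

/-- The number of peaks of a word: positions where a `U` is immediately followed by a `D`. -/
def numPeaks (w : List Bool) : ℕ := (w.zip w.tail).count (true, false)

/-- The word `U^a D^b`. -/
def upDown (a b : ℕ) : List Bool :=
  List.replicate a true ++ List.replicate b false

/-- A permutation `π` of `{0, …, n-1}` contains the pattern `σ` (a permutation of
`{0, …, m-1}`) if some subsequence of values of `π` is in the same relative order as `σ`. -/
def ContainsPattern {n m : ℕ} (π : Equiv.Perm (Fin n)) (σ : Equiv.Perm (Fin m)) : Prop :=
  ∃ f : Fin m → Fin n, StrictMono f ∧ ∀ a b : Fin m, π (f a) < π (f b) ↔ σ a < σ b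

/-- A permutation avoids a pattern if it does not contain it. -/
def AvoidsPattern {n m : ℕ} (π : Equiv.Perm (Fin n)) (σ : Equiv.Perm (Fin m)) : Prop :=
  ¬ ContainsPattern π σ

/-- The pattern 132 (0-indexed: 021). -/
def pat132 : Equiv.Perm (Fin 3) where
  toFun := ![0, 2, 1]
  invFun := ![0, 2, 1]
  left_inv := by intro x; fin_cases x <;> rfl
  right_inv := by intro x; fin_cases x <;> rfl

/-- The pattern 321 (0-indexed: 210). -/
def pat321 : Equiv.Perm (Fin 3) where
  toFun := ![2, 1, 0]
  invFun := ![2, 1, 0]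
  left_inv := by intro x; fin_cases x <;> rfl
  right_inv := by intro x; fin_cases x <;> rfl

/-- The pattern 4321 (0-indexed: 3210). -/
def pat4321 : Equiv.Perm (Fin 4) where
  toFun := ![3, 2, 1, 0]
  invFun := ![3, 2, 1, 0]
  left_inv := by intro x; fin_cases x <;> rfl
  right_inv := by intro x; fin_cases x <;> rfl

/-- The pattern 4231 (0-indexed: 3120). -/
def pat4231 : Equiv.Perm (Fin 4) where
  toFun := ![3, 1, 2, 0]
  invFun := ![3, 1, 2, 0]
  left_inv := by intro x; fin_cases x <;> rfl
  right_inv := by intro x; fin_cases x <;> rfl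

/-- The strictly decreasing pattern `(k+1)k⋯21` of length `k+1`. -/
def patDesc (k : ℕ) : Equiv.Perm (Fin (k+1)) where
  toFun := Fin.rev
  invFun := Fin.rev
  left_inv := Fin.rev_rev
  right_inv := Fin.rev_rev

/-- `w` has exactly three peaks and, in its (unique) decomposition
`U^{a₁}D^{b₁}U^{a₂}D^{b₂}U^{a₃}D^{b₃}` with all exponents positive,
`a₂ = 1` or `b₂ = 1`. -/
def ThreePeakMiddleOne (w : List Bool) : Prop :=
  numPeaks w = 3 ∧ ∃ a₁ b₁ a₂ b₂ a₃ b₃ : ℕ,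
    0 < a₁ ∧ 0 < b₁ ∧ 0 < a₂ ∧ 0 < b₂ ∧ 0 < a₃ ∧ 0 < b₃ ∧
    w = upDown a₁ b₁ ++ upDown a₂ b₂ ++ upDown a₃ b₃ ∧ (a₂ = 1 ∨ b₂ = 1)

/-- `i` is (the position of) a left-to-right minimum of `π`. -/
def IsLtrMin {n : ℕ} (π : Equiv.Perm (Fin n)) (i : Fin n) : Prop :=
  ∀ j : Fin n, j < i → π i < π j

section Aux

lemma numPeaks_nil : numPeaks [] = 0 := rfl
lemma numPeaks_single (x : Bool) : numPeaks [x] = 0 := rfl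
lemma numPeaks_cons_cons (x y : Bool) (r : List Bool) :
    numPeaks (x :: y :: r) = (if x = true ∧ y = false then 1 else 0) + numPeaks (y :: r) := by
  simp only [numPeaks, List.tail, List.zip_cons_cons, List.count_cons]
  by_cases hx : x = true <;> by_cases hy : y = false <;> simp [hx, hy] <;> omega

lemma numPeaks_false_cons (r : List Bool) : numPeaks (false :: r) = numPeaks r := by
  cases r with
  | nil => rfl
  | cons y t => rw [numPeaks_cons_cons]; simp

lemma numPeaks_true_true (r : List Bool) : numPeaks (true :: true :: r) = numPeaks (true :: r) := by
  rw [numPeaks_cons_cons]; simp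

lemma numPeaks_true_false (r : List Bool) :
    numPeaks (true :: false :: r) = 1 + numPeaks r := by
  rw [numPeaks_cons_cons, numPeaks_false_cons]; simp

lemma struct0 : ∀ w : List Bool, numPeaks w = 0 →
    ∃ i j, w = List.replicate i false ++ List.replicate j true := by
  intro w
  induction w with
  | nil => exact fun _ => ⟨0, 0, rfl⟩
  | cons x t ih =>
    intro h
    cases t with
    | nil =>
      cases x
      · exact ⟨1, 0, rfl⟩
      · exact ⟨0, 1, rfl⟩
    | cons y r =>
      rw [numPeaks_cons_cons] at h
      obtain ⟨i, j, hij⟩ := ih (by omega)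
      cases x with
      | false => exact ⟨i + 1, j, by simp [hij, List.replicate_succ]⟩
      | true =>
        have hy : y = true := by
          by_contra hy
          simp only [Bool.not_eq_true] at hy
          simp [hy] at h
        subst hy
        have hi : i = 0 := by
          rcases i with _ | i
          · rfl
          · exfalso; rw [List.replicate_succ] at hij; simp at hij
        subst hi
        simp only [List.replicate_zero, List.nil_append] at hij
        exact ⟨0, j + 1, by simp [List.replicate_succ, hij]⟩

lemma struct1 : ∀ w : List Bool, numPeaks w = 1 →
    ∃ i a b j, 0 < a ∧ 0 < b ∧
      w = List.replicate i false ++ List.replicate a true ++ List.replicate b false ++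
        List.replicate j true := by
  intro w
  induction w with
  | nil => intro h; simp [numPeaks_nil] at h
  | cons x t ih =>
    intro h
    cases t with
    | nil => simp [numPeaks_single] at h
    | cons y r =>
      rw [numPeaks_cons_cons] at h
      by_cases hp : x = true ∧ y = false
      · obtain ⟨hx, hy⟩ := hp
        subst hx; subst hy
        simp only [and_self, if_true] at h
        obtain ⟨i, j, hij⟩ := struct0 (false :: r) (by omega)
        have hi : 0 < i := by
          rcases i with _ | i
          · exfalso
            rcases j with _ | j
            · simp at hij
            · rw [List.replicate_succ] at hij; simp at hij
          · omega
        exact ⟨0, 1, i, j, by omega, hi, by simp [hij]⟩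
      · simp only [hp, if_false] at h
        obtain ⟨i, a, b, j, ha, hb, hab⟩ := ih (by omega)
        cases x with
        | false => exact ⟨i + 1, a, b, j, ha, hb, by simp [hab, List.replicate_succ]⟩
        | true =>
          have hy : y = true := by
            by_contra hy
            simp only [Bool.not_eq_true] at hy
            exact hp ⟨rfl, hy⟩
          subst hy
          have hi : i = 0 := by
            rcases i with _ | i
            · rfl
            · exfalso; rw [List.replicate_succ] at hab; simp at hab
          subst hi
          simp only [List.replicate_zero, List.nil_append] at hab
          refine ⟨0, a + 1, b, j, by omega, hb, ?_⟩
          rcases a with _ | a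
          · omega
          · rw [List.replicate_succ] at hab
            simp only [List.cons_append, List.cons.injEq, true_and] at hab
            simp [List.replicate_succ, hab]

lemma struct2 : ∀ w : List Bool, numPeaks w = 2 →
    ∃ i a₁ b₁ a₂ b₂ j, 0 < a₁ ∧ 0 < b₁ ∧ 0 < a₂ ∧ 0 < b₂ ∧
      w = List.replicate i false ++ List.replicate a₁ true ++ List.replicate b₁ false ++
        List.replicate a₂ true ++ List.replicate b₂ false ++ List.replicate j true := by
  intro w
  induction w with
  | nil => intro h; simp [numPeaks_nil] at h
  | cons x t ih =>
    intro h
    cases t with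
    | nil => simp [numPeaks_single] at h
    | cons y r =>
      rw [numPeaks_cons_cons] at h
      by_cases hp : x = true ∧ y = false
      · obtain ⟨hx, hy⟩ := hp
        subst hx; subst hy
        simp only [and_self, if_true] at h
        obtain ⟨i, a, b, j, ha, hb, hab⟩ := struct1 (false :: r) (by omega)
        have hi : 0 < i := by
          rcases i with _ | i
          · exfalso
            rcases a with _ | a
            · omega
            · rw [List.replicate_succ] at hab; simp at hab
          · omega
        exact ⟨0, 1, i, a, b, j, by omega, hi, ha, hb, by simp [hab]⟩
      · simp only [hp, if_false] at h
        obtain ⟨i, a₁, b₁, a₂, b₂, j, h1, h2, h3, h4, hab⟩ := ih (by omega)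
        cases x with
        | false =>
          exact ⟨i + 1, a₁, b₁, a₂, b₂, j, h1, h2, h3, h4, by simp [hab, List.replicate_succ]⟩
        | true =>
          have hy : y = true := by
            by_contra hy
            simp only [Bool.not_eq_true] at hy
            exact hp ⟨rfl, hy⟩
          subst hy
          have hi : i = 0 := by
            rcases i with _ | i
            · rfl
            · exfalso; rw [List.replicate_succ] at hab; simp at hab
          subst hi
          simp only [List.replicate_zero, List.nil_append] at hab
          refine ⟨0, a₁ + 1, b₁, a₂, b₂, j, by omega, h2, h3, h4, ?_⟩
          rcases a₁ with _ | a₁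
          · omega
          · rw [List.replicate_succ] at hab
            simp only [List.cons_append, List.cons.injEq, true_and] at hab
            simp [List.replicate_succ, hab]



lemma numPeaks_replicate_false_append (b : ℕ) (r : List Bool) :
    numPeaks (List.replicate b false ++ r) = numPeaks r := by
  induction b with
  | zero => rfl
  | succ b ih => rw [List.replicate_succ, List.cons_append, numPeaks_false_cons, ih]

lemma numPeaks_replicate_true_append (a : ℕ) (r : List Bool) :
    numPeaks (List.replicate (a+1) true ++ r) = numPeaks (true :: r) := by
  induction a with
  | zero => rfl
  | succ a ih =>
    rw [List.replicate_succ, List.cons_append]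
    have : List.replicate (a+1) true ++ r = true :: (List.replicate a true ++ r) := by
      simp [List.replicate_succ]
    rw [this, numPeaks_true_true, ← this, ih]

lemma numPeaks_upDown_append (a b : ℕ) (ha : 0 < a) (hb : 0 < b) (r : List Bool) :
    numPeaks (upDown a b ++ r) = 1 + numPeaks r := by
  obtain ⟨a', rfl⟩ : ∃ a', a = a' + 1 := ⟨a - 1, by omega⟩
  obtain ⟨b', rfl⟩ : ∃ b', b = b' + 1 := ⟨b - 1, by omega⟩
  rw [upDown, List.append_assoc, numPeaks_replicate_true_append]
  rw [List.replicate_succ, List.cons_append, numPeaks_true_false,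
    numPeaks_replicate_false_append]

lemma numPeaks_upDown (a b : ℕ) (ha : 0 < a) (hb : 0 < b) :
    numPeaks (upDown a b) = 1 := by
  have := numPeaks_upDown_append a b ha hb []
  simpa [numPeaks_nil] using this

lemma dyck_canonical2 (n a b : ℕ) (hb : 1 ≤ b) (hba : b ≤ a) (han : a + 1 ≤ n) :
    IsDyckWord n (upDown a b ++ upDown (n-a) (n-b)) ∧
      numPeaks (upDown a b ++ upDown (n-a) (n-b)) = 2 := by
  constructor
  · refine ⟨?_, ?_, ?_⟩
    · simp [upDown, List.count_replicate]; omega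
    · simp [upDown, List.count_replicate]; omega
    · intro k
      simp only [upDown, List.append_assoc, List.take_append,
        List.take_replicate, List.count_append, List.count_replicate, List.length_replicate,
        List.length_append]
      simp
      omega
  · rw [numPeaks_upDown_append a b (by omega) (by omega), numPeaks_upDown _ _ (by omega) (by omega)]

lemma dyck_canonical1 (n : ℕ) (hn : 1 ≤ n) :
    IsDyckWord n (upDown n n) ∧ numPeaks (upDown n n) = 1 := by
  constructor
  · refine ⟨?_, ?_, ?_⟩
    · simp [upDown, List.count_replicate]
    · simp [upDown, List.count_replicate]
    · intro k
      simp only [upDown, List.take_append,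
        List.take_replicate, List.count_append, List.count_replicate, List.length_replicate]
      simp
  · exact numPeaks_upDown n n hn hn

lemma dyck_classify (n : ℕ) (w : List Bool) (hn : 1 ≤ n) (hd : IsDyckWord n w)
    (hp : numPeaks w ≤ 2) :
    w = upDown n n ∨ ∃ a b, 1 ≤ b ∧ b ≤ a ∧ a + 1 ≤ n ∧
      w = upDown a b ++ upDown (n-a) (n-b) := by
  obtain ⟨hct, hcf, hpre⟩ := hd
  interval_cases h : numPeaks w
  · -- zero peaks: impossible
    exfalso
    obtain ⟨i, j, rfl⟩ := struct0 w h
    simp only [List.count_append, List.count_replicate] at hct hcf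
    simp at hct hcf
    have hk := hpre i
    simp only [List.take_append, List.take_replicate, List.count_append,
      List.count_replicate, List.length_replicate] at hk
    simp at hk
    omega
  · -- one peak
    obtain ⟨i, a, b, j, ha, hb, rfl⟩ := struct1 w h
    simp only [List.count_append, List.count_replicate] at hct hcf
    simp at hct hcf
    have hi := hpre i
    have hk := hpre (i + a + b)
    simp only [List.take_append, List.take_replicate, List.count_append,
      List.count_replicate, List.length_replicate, List.length_append] at hi hk
    simp at hi hk
    left
    have hi0 : i = 0 := by omega
    have hj0 : j = 0 := by omega
    have han : a = n := by omega
    have hbn : b = n := by omega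
    subst hi0; subst hj0; subst han; subst hbn
    simp [upDown]
  · -- two peaks
    obtain ⟨i, a₁, b₁, a₂, b₂, j, h1, h2, h3, h4, rfl⟩ := struct2 w h
    simp only [List.count_append, List.count_replicate] at hct hcf
    simp at hct hcf
    have hi := hpre i
    have hk := hpre (i + a₁ + b₁ + a₂ + b₂)
    have hm := hpre (i + a₁ + b₁)
    simp only [List.take_append, List.take_replicate, List.count_append,
      List.count_replicate, List.length_replicate, List.length_append] at hi hk hm
    simp at hi hk hm
    right
    have hi0 : i = 0 := by omega
    have hj0 : j = 0 := by omega
    refine ⟨a₁, b₁, h2, by omega, by omega, ?_⟩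
    subst hi0; subst hj0
    have ha2 : a₂ = n - a₁ := by omega
    have hb2 : b₂ = n - b₁ := by omega
    subst ha2; subst hb2
    simp [upDown]

lemma rep_inj (x : Bool) : ∀ a a' (u u' : List Bool), u.head? ≠ some x → u'.head? ≠ some x →
    List.replicate a x ++ u = List.replicate a' x ++ u' → a = a' ∧ u = u' := by
  intro a
  induction a with
  | zero =>
    intro a' u u' hu hu' h
    cases a' with
    | zero => simpa using h
    | succ a' =>
      exfalso
      rw [List.replicate_succ] at h
      simp only [List.replicate_zero, List.nil_append, List.cons_append] at h
      rw [h] at hu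
      simp at hu
  | succ a ih =>
    intro a' u u' hu hu' h
    cases a' with
    | zero =>
      exfalso
      rw [List.replicate_succ] at h
      simp only [List.replicate_zero, List.nil_append, List.cons_append] at h
      rw [← h] at hu'
      simp at hu'
    | succ a' =>
      rw [List.replicate_succ, List.replicate_succ] at h
      simp only [List.cons_append, List.cons.injEq, true_and] at h
      obtain ⟨he, hu⟩ := ih a' u u' hu hu' h
      exact ⟨by omega, hu⟩

lemma upDown2_inj {n a b a' b' : ℕ} (hb : 1 ≤ b) (hba : b ≤ a) (ha : a + 1 ≤ n)
    (hb' : 1 ≤ b') (hba' : b' ≤ a') (ha' : a' + 1 ≤ n)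
    (h : upDown a b ++ upDown (n-a) (n-b) = upDown a' b' ++ upDown (n-a') (n-b')) :
    a = a' ∧ b = b' := by
  have hshape : ∀ (A B C D : ℕ),
      upDown A (B+1) ++ upDown C D = List.replicate A true ++
        (false :: (List.replicate B false ++
          (List.replicate C true ++ List.replicate D false))) := by
    intro A B C D
    simp [upDown, List.replicate_succ]
  obtain ⟨b0, rfl⟩ : ∃ t, b = t + 1 := ⟨b - 1, by omega⟩
  obtain ⟨b0', rfl⟩ : ∃ t, b' = t + 1 := ⟨b' - 1, by omega⟩
  rw [hshape, hshape] at h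
  have hhd : ∀ (c : ℕ) (l : List Bool), 0 < c →
      (List.replicate c true ++ l).head? = some true := by
    intro c l hc
    obtain ⟨c0, rfl⟩ : ∃ t, c = t + 1 := ⟨c - 1, by omega⟩
    simp [List.replicate_succ]
  obtain ⟨haa, htail⟩ := rep_inj true a a' _ _ (by simp) (by simp) h
  simp only [List.cons.injEq, true_and] at htail
  obtain ⟨hbb, -⟩ := rep_inj false b0 b0' _ _
    (by rw [hhd (n - a) _ (by omega)]; simp)
    (by rw [hhd (n - a') _ (by omega)]; simp) htail
  omega


def rotNat (a b i : ℕ) : ℕ := if i < a then i + b else if i < a + b then i - a else i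

lemma rotNat_lt (a b n i : ℕ) (hab : a + b ≤ n) (hi : i < n) : rotNat a b i < n := by
  unfold rotNat; split_ifs <;> omega

def rotFun (a b n : ℕ) (hab : a + b ≤ n) (i : Fin n) : Fin n :=
  ⟨rotNat a b i, rotNat_lt a b n i hab i.isLt⟩

lemma rotFun_inv (a b n : ℕ) (hab : a + b ≤ n) (i : Fin n) :
    rotFun b a n (by omega) (rotFun a b n hab i) = i := by
  apply Fin.ext
  show rotNat b a (rotNat a b (i : ℕ)) = (i : ℕ)
  unfold rotNat
  split_ifs <;> omega

def rotPerm (a b n : ℕ) (hab : a + b ≤ n) : Equiv.Perm (Fin n) where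
  toFun := rotFun a b n hab
  invFun := rotFun b a n (by omega)
  left_inv := rotFun_inv a b n hab
  right_inv := rotFun_inv b a n (by omega)

lemma rotPerm_val (a b n : ℕ) (hab : a + b ≤ n) (i : Fin n) :
    (rotPerm a b n hab i : ℕ) = if (i:ℕ) < a then (i:ℕ) + b
      else if (i:ℕ) < a + b then (i:ℕ) - a else (i:ℕ) := rfl





lemma contains132_iff {n : ℕ} (π : Equiv.Perm (Fin n)) :
    ContainsPattern π pat132 ↔
      ∃ i j k : Fin n, i < j ∧ j < k ∧ π i < π k ∧ π k < π j := by
  constructor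
  · rintro ⟨f, hm, hr⟩
    refine ⟨f 0, f 1, f 2, hm (by decide), hm (by decide), ?_, ?_⟩
    · exact (hr 0 2).2 (by decide)
    · exact (hr 2 1).2 (by decide)
  · rintro ⟨i, j, k, hij, hjk, h1, h2⟩
    refine ⟨fun t => if (t : ℕ) = 0 then i else if (t : ℕ) = 1 then j else k, ?_, ?_⟩
    · intro a b hab
      fin_cases a <;> fin_cases b <;>
        first
          | exact hij | exact hjk | exact hij.trans hjk | exact absurd hab (by decide)
    · intro a b
      have h3 : π i < π j := h1.trans h2
      fin_cases a <;> fin_cases b <;>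
        first
          | exact iff_of_false (lt_irrefl _) (by decide)
          | exact iff_of_true h1 (by decide)
          | exact iff_of_true h2 (by decide)
          | exact iff_of_true h3 (by decide)
          | exact iff_of_false h1.asymm (by decide)
          | exact iff_of_false h2.asymm (by decide)
          | exact iff_of_false h3.asymm (by decide)

lemma contains321_iff {n : ℕ} (π : Equiv.Perm (Fin n)) :
    ContainsPattern π pat321 ↔
      ∃ i j k : Fin n, i < j ∧ j < k ∧ π j < π i ∧ π k < π j := by
  constructor
  · rintro ⟨f, hm, hr⟩
    refine ⟨f 0, f 1, f 2, hm (by decide), hm (by decide), ?_, ?_⟩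
    · exact (hr 1 0).2 (by decide)
    · exact (hr 2 1).2 (by decide)
  · rintro ⟨i, j, k, hij, hjk, h1, h2⟩
    refine ⟨fun t => if (t : ℕ) = 0 then i else if (t : ℕ) = 1 then j else k, ?_, ?_⟩
    · intro a b hab
      fin_cases a <;> fin_cases b <;>
        first
          | exact hij | exact hjk | exact hij.trans hjk | exact absurd hab (by decide)
    · intro a b
      have h3 : π k < π i := h2.trans h1
      fin_cases a <;> fin_cases b <;>
        first
          | exact iff_of_false (lt_irrefl _) (by decide)
          | exact iff_of_true h1 (by decide)
          | exact iff_of_true h2 (by decide)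
          | exact iff_of_true h3 (by decide)
          | exact iff_of_false h1.asymm (by decide)
          | exact iff_of_false h2.asymm (by decide)
          | exact iff_of_false h3.asymm (by decide)

lemma id_avoids132 {n : ℕ} : AvoidsPattern (1 : Equiv.Perm (Fin n)) pat132 := by
  rw [AvoidsPattern, contains132_iff]
  rintro ⟨i, j, k, hij, hjk, h1, h2⟩
  simp only [Equiv.Perm.coe_one, id_eq] at h1 h2
  exact absurd (hjk.trans h2) (lt_irrefl _)

lemma id_avoids321 {n : ℕ} : AvoidsPattern (1 : Equiv.Perm (Fin n)) pat321 := by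
  rw [AvoidsPattern, contains321_iff]
  rintro ⟨i, j, k, hij, hjk, h1, h2⟩
  simp only [Equiv.Perm.coe_one, id_eq] at h1 h2
  exact absurd (hij.trans h1) (lt_irrefl _)

lemma rot_avoids132 {n a b : ℕ} (hab : a + b ≤ n) :
    AvoidsPattern (rotPerm a b n hab) pat132 := by
  rw [AvoidsPattern, contains132_iff]
  rintro ⟨i, j, k, hij, hjk, h1, h2⟩
  rw [Fin.lt_def] at hij hjk h1 h2
  rw [rotPerm_val, rotPerm_val] at h1 h2
  split_ifs at h1 h2 <;> omega

lemma rot_avoids321 {n a b : ℕ} (hab : a + b ≤ n) :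
    AvoidsPattern (rotPerm a b n hab) pat321 := by
  rw [AvoidsPattern, contains321_iff]
  rintro ⟨i, j, k, hij, hjk, h1, h2⟩
  rw [Fin.lt_def] at hij hjk h1 h2
  rw [rotPerm_val, rotPerm_val] at h1 h2
  split_ifs at h1 h2 <;> omega

lemma count_le {n : ℕ} (π : Equiv.Perm (Fin n)) (lo hi d : ℕ) (hhi : hi ≤ n) (hd : d ≤ n)
    (H : ∀ v : Fin n, lo ≤ (v:ℕ) → (v:ℕ) < hi → ((π.symm v : Fin n) : ℕ) < d) :
    hi - lo ≤ d := by
  classical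
  set S := Finset.univ.filter (fun v : Fin n => lo ≤ (v:ℕ) ∧ (v:ℕ) < hi) with hSdef
  set T := Finset.univ.filter (fun p : Fin n => (p:ℕ) < d) with hTdef
  have hS : S.card = hi - lo := by
    have himg : S.image Fin.val = Finset.Ico lo hi := by
      ext m
      simp only [hSdef, Finset.mem_image, Finset.mem_filter, Finset.mem_univ, true_and,
        Finset.mem_Ico]
      constructor
      · rintro ⟨v, ⟨h1, h2⟩, rfl⟩; exact ⟨h1, h2⟩
      · rintro ⟨h1, h2⟩; exact ⟨⟨m, lt_of_lt_of_le h2 hhi⟩, ⟨h1, h2⟩, rfl⟩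
    have := Finset.card_image_of_injective S Fin.val_injective
    rw [himg, Nat.card_Ico] at this
    omega
  have hT : T.card = d := by
    have himg : T.image Fin.val = Finset.range d := by
      ext m
      simp only [hTdef, Finset.mem_image, Finset.mem_filter, Finset.mem_univ, true_and,
        Finset.mem_range]
      constructor
      · rintro ⟨v, h1, rfl⟩; exact h1
      · rintro h1; exact ⟨⟨m, lt_of_lt_of_le h1 hd⟩, h1, rfl⟩
    have := Finset.card_image_of_injective T Fin.val_injective
    rw [himg, Finset.card_range] at this
    omega
  have hsub : S.image π.symm ⊆ T := by
    intro p hp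
    simp only [hSdef, Finset.mem_image, Finset.mem_filter, Finset.mem_univ, true_and] at hp
    obtain ⟨v, ⟨h1, h2⟩, rfl⟩ := hp
    simp only [hTdef, Finset.mem_filter, Finset.mem_univ, true_and]
    exact H v h1 h2
  have := Finset.card_le_card hsub
  rw [Finset.card_image_of_injective S π.symm.injective] at this
  omega

lemma count_ge {n : ℕ} (π : Equiv.Perm (Fin n)) (c d : ℕ) (hc : c < n) (hd : d < n)
    (H : ∀ v : Fin n, c < (v:ℕ) → d < ((π.symm v : Fin n) : ℕ)) : d ≤ c := by
  classical
  set S := Finset.univ.filter (fun v : Fin n => c < (v:ℕ)) with hSdef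
  set T := Finset.univ.filter (fun p : Fin n => d < (p:ℕ)) with hTdef
  have hS : S.card = n - c - 1 := by
    have himg : S.image Fin.val = Finset.Ico (c+1) n := by
      ext m
      simp only [hSdef, Finset.mem_image, Finset.mem_filter, Finset.mem_univ, true_and,
        Finset.mem_Ico]
      constructor
      · rintro ⟨v, h1, rfl⟩; exact ⟨h1, v.isLt⟩
      · rintro ⟨h1, h2⟩; exact ⟨⟨m, h2⟩, h1, rfl⟩
    have := Finset.card_image_of_injective S Fin.val_injective
    rw [himg, Nat.card_Ico] at this
    omega
  have hT : T.card = n - d - 1 := by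
    have himg : T.image Fin.val = Finset.Ico (d+1) n := by
      ext m
      simp only [hTdef, Finset.mem_image, Finset.mem_filter, Finset.mem_univ, true_and,
        Finset.mem_Ico]
      constructor
      · rintro ⟨v, h1, rfl⟩; exact ⟨h1, v.isLt⟩
      · rintro ⟨h1, h2⟩; exact ⟨⟨m, h2⟩, h1, rfl⟩
    have := Finset.card_image_of_injective T Fin.val_injective
    rw [himg, Nat.card_Ico] at this
    omega
  have hsub : S.image π.symm ⊆ T := by
    intro p hp
    simp only [hSdef, Finset.mem_image, Finset.mem_filter, Finset.mem_univ, true_and] at hp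
    obtain ⟨v, h1, rfl⟩ := hp
    simp only [hTdef, Finset.mem_filter, Finset.mem_univ, true_and]
    exact H v h1
  have := Finset.card_le_card hsub
  rw [Finset.card_image_of_injective S π.symm.injective] at this
  omega

lemma perm_classify {n : ℕ} (π : Equiv.Perm (Fin n)) (h132 : AvoidsPattern π pat132)
    (h321 : AvoidsPattern π pat321) (hne : π ≠ 1) :
    ∃ a b, ∃ hab : a + b ≤ n, 1 ≤ a ∧ 1 ≤ b ∧ π = rotPerm a b n hab := by
  rw [AvoidsPattern, contains132_iff] at h132
  rw [AvoidsPattern, contains321_iff] at h321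
  have hn : 0 < n := by
    rcases Nat.eq_zero_or_pos n with h | h
    · subst h; exact absurd (Equiv.ext (fun x => x.elim0)) hne
    · exact h
  obtain ⟨z, hz0⟩ : ∃ z : Fin n, (z : ℕ) = 0 := ⟨⟨0, hn⟩, rfl⟩
  -- there is a descent
  have hdesc : ∃ i j : Fin n, i < j ∧ π j < π i := by
    by_contra hcon
    push_neg at hcon
    have hmono : StrictMono π := fun i j hij =>
      lt_of_le_of_ne (hcon i j hij) (fun e => (π.injective.ne hij.ne) e)
    have hmono' : StrictMono (π.symm : Fin n → Fin n) := by
      intro u v huv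
      by_contra hc
      push_neg at hc
      have h1 : π.symm v ≤ π.symm u := hc
      have := hmono.monotone h1
      rw [Equiv.apply_symm_apply, Equiv.apply_symm_apply] at this
      exact absurd huv (not_lt.2 this)
    apply hne
    apply Equiv.ext
    intro i
    letI : WellFoundedLT (Fin n) := inferInstance
    have h1 : i ≤ π i := hmono.le_apply
    have h2 : π i ≤ i := by
      have h3 : π i ≤ π.symm (π i) := hmono'.le_apply
      rwa [Equiv.symm_apply_apply] at h3
    exact le_antisymm h2 h1
  -- first value is positive
  have hb1 : 0 < (π z : ℕ) := by
    by_contra hc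
    push_neg at hc
    have hπz0 : (π z : ℕ) = 0 := by omega
    obtain ⟨i, j, hij, hji⟩ := hdesc
    have hjz : j ≠ z := by
      rintro rfl
      rw [Fin.lt_def] at hij
      omega
    have hiz : i ≠ z := by
      rintro rfl
      rw [Fin.lt_def] at hji
      omega
    have hzi : z < i := by
      have : (i : ℕ) ≠ 0 := fun e => hiz (Fin.ext (by rw [e, hz0]))
      exact Fin.lt_def.mpr (by omega)
    have hzj : π z < π j := by
      have : (π j : ℕ) ≠ 0 := by
        intro e
        exact hjz (π.injective (Fin.ext (by rw [e, hπz0])))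
      exact Fin.lt_def.mpr (by omega)
    exact h132 ⟨z, i, j, hzi, hij, hzj, hji⟩
  obtain ⟨b, hbdef⟩ : ∃ b, b = (π z : ℕ) := ⟨_, rfl⟩
  have hbn : b < n := by rw [hbdef]; exact (π z).isLt
  -- small values appear in increasing order
  have lows : ∀ i j : Fin n, i < j → (π i : ℕ) < b → (π j : ℕ) < b → π i < π j := by
    intro i j hij hi hj
    by_contra hcon
    push_neg at hcon
    have hji : π j < π i := lt_of_le_of_ne hcon (π.injective.ne hij.ne')
    have hiz : i ≠ z := by rintro rfl; omega
    have hzi : z < i := by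
      have : (i : ℕ) ≠ 0 := fun e => hiz (Fin.ext (by rw [e, hz0]))
      exact Fin.lt_def.mpr (by omega)
    exact h321 ⟨z, i, j, hzi, hij, Fin.lt_def.mpr (by omega), hji⟩
  -- large values appear in increasing order
  have highs : ∀ i j : Fin n, i < j → b ≤ (π i : ℕ) → b ≤ (π j : ℕ) → π i < π j := by
    intro i j hij hi hj
    by_contra hcon
    push_neg at hcon
    have hji : π j < π i := lt_of_le_of_ne hcon (π.injective.ne hij.ne')
    have hiz : i ≠ z := by
      rintro rfl
      rw [Fin.lt_def] at hji
      omega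
    have hzi : z < i := by
      have : (i : ℕ) ≠ 0 := fun e => hiz (Fin.ext (by rw [e, hz0]))
      exact Fin.lt_def.mpr (by omega)
    have hjz : j ≠ z := by
      rintro rfl
      rw [Fin.lt_def] at hij
      omega
    have hzj : π z < π j := by
      have : (π j : ℕ) ≠ b := by
        intro e
        exact hjz (π.injective (Fin.ext (e.trans hbdef)))
      exact Fin.lt_def.mpr (by omega)
    exact h132 ⟨z, i, j, hzi, hij, hzj, hji⟩
  -- no low-high-low
  have lhl : ∀ i j k : Fin n, i < j → j < k →
      (π i : ℕ) < b → b ≤ (π j : ℕ) → (π k : ℕ) < b → False := by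
    intro i j k hij hjk hi hjv hk
    exact h132 ⟨i, j, k, hij, hjk, lows i k (hij.trans hjk) hi hk, Fin.lt_def.mpr (by omega)⟩
  obtain ⟨a, hadef⟩ : ∃ a, a = ((π.symm z : Fin n) : ℕ) := ⟨_, rfl⟩
  have ha1 : 0 < a := by
    have hzz : π.symm z ≠ z := by
      intro e
      have h4 := congrArg (fun x => ((π x : Fin n) : ℕ)) e
      simp only [Equiv.apply_symm_apply] at h4
      omega
    have : ((π.symm z : Fin n) : ℕ) ≠ 0 := fun e => hzz (Fin.ext (by rw [e, hz0]))
    omega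
  -- the low values occupy positions a, a+1, ...
  have key : ∀ t, t < b → ∃ h : a + t < n, (π ⟨a + t, h⟩ : ℕ) = t := by
    intro t
    induction t with
    | zero =>
      intro _
      have h : a + 0 < n := by have := (π.symm z).isLt; omega
      refine ⟨h, ?_⟩
      have he : (⟨a + 0, h⟩ : Fin n) = π.symm z :=
        Fin.ext (show a + 0 = ((π.symm z : Fin n) : ℕ) by omega)
      rw [he, Equiv.apply_symm_apply]
      exact hz0
    | succ t ih =>
      intro ht
      obtain ⟨h1, h2⟩ := ih (by omega)
      obtain ⟨v, hv⟩ : ∃ v : Fin n, (v : ℕ) = t + 1 := ⟨⟨t + 1, by omega⟩, rfl⟩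
      obtain ⟨p, hpdef⟩ : ∃ p, p = π.symm v := ⟨_, rfl⟩
      have hπp : (π p : ℕ) = t + 1 := by rw [hpdef, Equiv.apply_symm_apply, hv]
      have hstep : a + t < (p : ℕ) := by
        by_contra hcon
        push_neg at hcon
        have hne2 : (p : ℕ) ≠ a + t := by
          intro e
          have hpe : p = (⟨a + t, h1⟩ : Fin n) := Fin.ext e
          rw [hpe] at hπp
          omega
        have hlt : p < (⟨a + t, h1⟩ : Fin n) :=
          Fin.lt_def.mpr (show (p : ℕ) < a + t by omega)
        have hl := lows p ⟨a + t, h1⟩ hlt (by omega) (by omega)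
        rw [Fin.lt_def, hπp, h2] at hl
        omega
      have h3 : a + (t + 1) < n := by have := p.isLt; omega
      have hq : (p : ℕ) = a + t + 1 := by
        by_contra hcon
        have hlt : a + t + 1 < (p : ℕ) := by omega
        obtain ⟨q, hqv⟩ : ∃ q : Fin n, (q : ℕ) = a + t + 1 := ⟨⟨a + t + 1, h3⟩, rfl⟩
        by_cases hql : (π q : ℕ) < b
        · have l1 := lows ⟨a + t, h1⟩ q
            (Fin.lt_def.mpr (show a + t < (q : ℕ) by omega)) (by omega) hql
          have l2 := lows q p (Fin.lt_def.mpr (by omega)) hql (by omega)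
          rw [Fin.lt_def, h2] at l1
          rw [Fin.lt_def, hπp] at l2
          omega
        · exact lhl ⟨a + t, h1⟩ q p
            (Fin.lt_def.mpr (show a + t < (q : ℕ) by omega))
            (Fin.lt_def.mpr (by omega)) (by omega) (by omega) (by omega)
      refine ⟨h3, ?_⟩
      have he : (⟨a + (t + 1), h3⟩ : Fin n) = p := Fin.ext (show a + (t + 1) = (p : ℕ) by omega)
      rw [he]
      exact hπp
  have hab : a + b ≤ n := by
    obtain ⟨h, _⟩ := key (b - 1) (by omega)
    omega
  -- positions before a carry large values
  have poslow_high : ∀ i : Fin n, (i : ℕ) < a → b ≤ (π i : ℕ) := by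
    intro i hi
    by_contra hc
    push_neg at hc
    have hlt : i < π.symm z := Fin.lt_def.mpr (by omega)
    have hl := lows i (π.symm z) hlt hc (by rw [Equiv.apply_symm_apply]; omega)
    rw [Fin.lt_def, Equiv.apply_symm_apply] at hl
    omega
  -- lower bound on initial segment
  have lowbd : ∀ m : ℕ, ∀ h : m < n, m < a → b + m ≤ (π ⟨m, h⟩ : ℕ) := by
    intro m
    induction m with
    | zero =>
      intro h _
      have he : (⟨0, h⟩ : Fin n) = z := Fin.ext (show (0 : ℕ) = (z : ℕ) from hz0.symm)
      rw [he]
      omega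
    | succ m ih =>
      intro h hm
      have h' : m < n := by omega
      have hih := ih h' (by omega)
      have hh := highs ⟨m, h'⟩ ⟨m + 1, h⟩ (Fin.lt_def.mpr (show m < m + 1 by omega))
        (poslow_high _ (show m < a by omega)) (poslow_high _ (show m + 1 < a from hm))
      rw [Fin.lt_def] at hh
      omega
  -- upper bound on initial segment
  have upbd : ∀ i : Fin n, (i : ℕ) < a → (π i : ℕ) ≤ b + (i : ℕ) := by
    intro i hi
    have H : ∀ v : Fin n, b ≤ (v : ℕ) → (v : ℕ) < (π i : ℕ) →
        ((π.symm v : Fin n) : ℕ) < (i : ℕ) := by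
      intro v hv1 hv2
      by_contra hcon
      push_neg at hcon
      have hne2 : ((π.symm v : Fin n) : ℕ) ≠ (i : ℕ) := by
        intro e
        have he : π.symm v = i := Fin.ext e
        rw [← he, Equiv.apply_symm_apply] at hv2
        omega
      have hiq : i < π.symm v := Fin.lt_def.mpr (by omega)
      have hh := highs i (π.symm v) hiq (poslow_high i hi)
        (by rw [Equiv.apply_symm_apply]; omega)
      rw [Fin.lt_def, Equiv.apply_symm_apply] at hh
      omega
    have := count_le π b ((π i : ℕ)) ((i : ℕ)) (π i).isLt.le i.isLt.le H
    omega
  -- tail positions carry large values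
  have poshigh2 : ∀ i : Fin n, a + b ≤ (i : ℕ) → b ≤ (π i : ℕ) := by
    intro i hi
    by_contra hc
    push_neg at hc
    obtain ⟨h1, h2⟩ := key ((π i : ℕ)) hc
    have he : (⟨a + (π i : ℕ), h1⟩ : Fin n) = i := π.injective (Fin.ext h2)
    have hvi : a + (π i : ℕ) = (i : ℕ) := congrArg Fin.val he
    omega
  -- tail positions are fixed
  have tail_eq : ∀ i : Fin n, a + b ≤ (i : ℕ) → (π i : ℕ) = (i : ℕ) := by
    intro i hi
    have hhi : b ≤ (π i : ℕ) := poshigh2 i hi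
    have Hup : ∀ v : Fin n, 0 ≤ (v : ℕ) → (v : ℕ) < (π i : ℕ) →
        ((π.symm v : Fin n) : ℕ) < (i : ℕ) := by
      intro v _ hv
      by_cases hvb : (v : ℕ) < b
      · obtain ⟨h1, h2⟩ := key ((v : ℕ)) hvb
        have he : π.symm v = ⟨a + (v : ℕ), h1⟩ := by
          rw [Equiv.symm_apply_eq]
          exact Fin.ext h2.symm
        have hval : ((π.symm v : Fin n) : ℕ) = a + (v : ℕ) := congrArg Fin.val he
        omega
      · push_neg at hvb
        by_contra hcon
        push_neg at hcon
        have hne2 : ((π.symm v : Fin n) : ℕ) ≠ (i : ℕ) := by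
          intro e
          have he : π.symm v = i := Fin.ext e
          rw [← he, Equiv.apply_symm_apply] at hv
          omega
        have hiq : i < π.symm v := Fin.lt_def.mpr (by omega)
        have hh := highs i (π.symm v) hiq hhi (by rw [Equiv.apply_symm_apply]; omega)
        rw [Fin.lt_def, Equiv.apply_symm_apply] at hh
        omega
    have hup := count_le π 0 ((π i : ℕ)) ((i : ℕ)) (π i).isLt.le i.isLt.le Hup
    have Hlo : ∀ v : Fin n, (π i : ℕ) < (v : ℕ) → (i : ℕ) < ((π.symm v : Fin n) : ℕ) := by
      intro v hv
      by_contra hcon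
      push_neg at hcon
      have hne2 : ((π.symm v : Fin n) : ℕ) ≠ (i : ℕ) := by
        intro e
        have he : π.symm v = i := Fin.ext e
        rw [← he, Equiv.apply_symm_apply] at hv
        omega
      have hqi : π.symm v < i := Fin.lt_def.mpr (by omega)
      have hh := highs (π.symm v) i hqi (by rw [Equiv.apply_symm_apply]; omega) hhi
      rw [Fin.lt_def, Equiv.apply_symm_apply] at hh
      omega
    have hlo := count_ge π ((π i : ℕ)) ((i : ℕ)) (π i).isLt i.isLt Hlo
    omega
  refine ⟨a, b, hab, ha1, by omega, ?_⟩
  apply Equiv.ext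
  intro i
  apply Fin.ext
  rw [rotPerm_val]
  by_cases hc1 : (i : ℕ) < a
  · rw [if_pos hc1]
    have hl := lowbd ((i : ℕ)) i.isLt hc1
    have hu := upbd i hc1
    rw [Fin.eta] at hl
    omega
  · rw [if_neg hc1]
    by_cases hc2 : (i : ℕ) < a + b
    · rw [if_pos hc2]
      obtain ⟨hh1, hh2⟩ := key ((i : ℕ) - a) (by omega)
      have he : (⟨a + ((i : ℕ) - a), hh1⟩ : Fin n) = i :=
        Fin.ext (show a + ((i : ℕ) - a) = (i : ℕ) by omega)
      rw [he] at hh2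
      omega
    · rw [if_neg hc2]
      exact tail_eq i (by omega)


def dyckMap (n : ℕ) (hn : 1 ≤ n)
    (o : Option {p : ℕ × ℕ // 1 ≤ p.2 ∧ p.2 ≤ p.1 ∧ p.1 + 1 ≤ n}) :
    {w : List Bool // IsDyckWord n w ∧ numPeaks w ≤ 2} :=
  match o with
  | none => ⟨upDown n n, (dyck_canonical1 n hn).1, by rw [(dyck_canonical1 n hn).2]; omega⟩
  | some ⟨(a, b), hp⟩ =>
      ⟨upDown a b ++ upDown (n - a) (n - b),
        (dyck_canonical2 n a b hp.1 hp.2.1 hp.2.2).1,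
        by rw [(dyck_canonical2 n a b hp.1 hp.2.1 hp.2.2).2]⟩

lemma dyckMap_bij (n : ℕ) (hn : 1 ≤ n) : Function.Bijective (dyckMap n hn) := by
  constructor
  · rintro (_ | ⟨⟨a, b⟩, hp⟩) (_ | ⟨⟨a', b'⟩, hp'⟩) h
    · rfl
    · exfalso
      have hw := congrArg (fun x => numPeaks x.val) h
      simp only [dyckMap] at hw
      rw [(dyck_canonical1 n hn).2, (dyck_canonical2 n a' b' hp'.1 hp'.2.1 hp'.2.2).2] at hw
      omega
    · exfalso
      have hw := congrArg (fun x => numPeaks x.val) h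
      simp only [dyckMap] at hw
      rw [(dyck_canonical1 n hn).2, (dyck_canonical2 n a b hp.1 hp.2.1 hp.2.2).2] at hw
      omega
    · have hw := congrArg (fun x => x.val) h
      simp only [dyckMap] at hw
      obtain ⟨h1, h2⟩ := upDown2_inj hp.1 hp.2.1 hp.2.2 hp'.1 hp'.2.1 hp'.2.2 hw
      subst h1; subst h2
      rfl
  · rintro ⟨w, hw, hp⟩
    rcases dyck_classify n w hn hw hp with h | ⟨a, b, h1, h2, h3, h4⟩
    · exact ⟨none, Subtype.ext h.symm⟩
    · exact ⟨some ⟨(a, b), h1, h2, h3⟩, Subtype.ext h4.symm⟩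

def permMap (n : ℕ)
    (o : Option {p : ℕ × ℕ // 1 ≤ p.1 ∧ 1 ≤ p.2 ∧ p.1 + p.2 ≤ n}) :
    {π : Equiv.Perm (Fin n) // AvoidsPattern π pat132 ∧ AvoidsPattern π pat321} :=
  match o with
  | none => ⟨1, id_avoids132, id_avoids321⟩
  | some ⟨(a, b), hp⟩ => ⟨rotPerm a b n hp.2.2, rot_avoids132 _, rot_avoids321 _⟩

lemma rotPerm_ne_one (n a b : ℕ) (hn : 1 ≤ n) (hab : a + b ≤ n) (ha : 1 ≤ a) (hb : 1 ≤ b) :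
    rotPerm a b n hab ≠ 1 := by
  intro h
  have := congrArg (fun π : Equiv.Perm (Fin n) => ((π ⟨0, hn⟩ : Fin n) : ℕ)) h
  simp only [Equiv.Perm.coe_one, id_eq] at this
  rw [rotPerm_val] at this
  simp only [Fin.val_mk] at this
  rw [if_pos (by omega)] at this
  omega

lemma permMap_bij (n : ℕ) (hn : 1 ≤ n) : Function.Bijective (permMap n) := by
  constructor
  · rintro (_ | ⟨⟨a, b⟩, hp⟩) (_ | ⟨⟨a', b'⟩, hp'⟩) h
    · rfl
    · exfalso
      have hw := congrArg (fun x => x.val) h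
      simp only [permMap] at hw
      exact rotPerm_ne_one n a' b' hn hp'.2.2 hp'.1 hp'.2.1 hw.symm
    · exfalso
      have hw := congrArg (fun x => x.val) h
      simp only [permMap] at hw
      exact rotPerm_ne_one n a b hn hp.2.2 hp.1 hp.2.1 hw
    · have hw := congrArg (fun x => x.val) h
      simp only [permMap] at hw
      have hb : b = b' := by
        have h0 := congrArg (fun π : Equiv.Perm (Fin n) => ((π ⟨0, hn⟩ : Fin n) : ℕ)) hw
        simp only [rotPerm_val, Fin.val_mk] at h0
        rw [if_pos (show (0:ℕ) < a by omega), if_pos (show (0:ℕ) < a' by omega)] at h0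
        omega
      have ha : a = a' := by
        have h0 := congrArg
          (fun π : Equiv.Perm (Fin n) => ((π.symm ⟨0, hn⟩ : Fin n) : ℕ)) hw
        have e1 : (((rotPerm a b n hp.2.2).symm ⟨0, hn⟩ : Fin n) : ℕ) = rotNat b a 0 := rfl
        have e2 : (((rotPerm a' b' n hp'.2.2).symm ⟨0, hn⟩ : Fin n) : ℕ) = rotNat b' a' 0 := rfl
        rw [e1, e2] at h0
        unfold rotNat at h0
        rw [if_pos (show (0:ℕ) < b by omega), if_pos (show (0:ℕ) < b' by omega)] at h0
        omega
      subst ha; subst hb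
      rfl
  · rintro ⟨π, h1, h2⟩
    by_cases hone : π = 1
    · exact ⟨none, Subtype.ext hone.symm⟩
    · obtain ⟨a, b, hab, ha, hb, heq⟩ := perm_classify π h1 h2 hone
      exact ⟨some ⟨(a, b), ha, hb, hab⟩, Subtype.ext heq.symm⟩

def paramEquiv (n : ℕ) :
    {p : ℕ × ℕ // 1 ≤ p.2 ∧ p.2 ≤ p.1 ∧ p.1 + 1 ≤ n} ≃
      {p : ℕ × ℕ // 1 ≤ p.1 ∧ 1 ≤ p.2 ∧ p.1 + p.2 ≤ n} where
  toFun p := ⟨(p.1.1 - p.1.2 + 1, p.1.2), by obtain ⟨h1, h2, h3⟩ := p.2; dsimp only; omega⟩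
  invFun p := ⟨(p.1.1 + p.1.2 - 1, p.1.2), by obtain ⟨h1, h2, h3⟩ := p.2; dsimp only; omega⟩
  left_inv p := Subtype.ext (by
    obtain ⟨⟨a, b⟩, h1, h2, h3⟩ := p
    dsimp only
    simp only [Prod.mk.injEq, and_true]
    omega)
  right_inv p := Subtype.ext (by
    obtain ⟨⟨a, b⟩, h1, h2, h3⟩ := p
    dsimp only
    simp only [Prod.mk.injEq, and_true]
    omega)

end Aux

/-- For every `n ≥ 1`, the number of Dyck words of semilength `n` with at most
two peaks equals the number of permutations of `{1, …, n}` avoiding both 132 and 321. -/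
theorem two_peak_dyck_count_eq_avoiding_perm_count (n : ℕ) (hn : 1 ≤ n) :
    Nat.card {w : List Bool // IsDyckWord n w ∧ numPeaks w ≤ 2} =
      Nat.card {π : Equiv.Perm (Fin n) //
        AvoidsPattern π pat132 ∧ AvoidsPattern π pat321} := by
  have e1 := Equiv.ofBijective _ (dyckMap_bij n hn)
  have e2 := Equiv.ofBijective _ (permMap_bij n hn)
  have e3 := Equiv.optionCongr (paramEquiv n)
  rw [← Nat.card_congr e1, ← Nat.card_congr e2, Nat.card_congr e3]
end

section
/- Let π be a permutation of {1,…,n} that avoids the pattern 132, and let k ≥ 1. Then π contains a strictly decreasing subsequence of length k+1 (i.e., indices i1 < i2 < … < i_{k+1} with π(i1) > π(i2) > … > π(i_{k+1})) if and only if π has at least k+1 left-to-right minima. -/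
/-! The left-to-right minima, read from left to right, always form a decreasing subsequence.
Conversely, send each entry `f a` of a decreasing subsequence to the position `g a` of the
minimum of `π` on `[0, f a]`, which is a left-to-right minimum. If `a < b` and `g a = g b`, then
`g a < f a < f b` and `π (g a) < π (f b) < π (f a)` is an occurrence of 132; so for a
132-avoider `g` is injective. -/

variable {n : ℕ} {π : Equiv.Perm (Fin n)}

theorem exists_isLtrMin_le_apply_le (π : Equiv.Perm (Fin n)) (i : Fin n) :
    ∃ j ≤ i, IsLtrMin π j ∧ π j ≤ π i := by
  obtain ⟨j, hj, hmin⟩ := (Finset.Iic i).exists_min_image π ⟨i, Finset.mem_Iic.2 le_rfl⟩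
  rw [Finset.mem_Iic] at hj
  refine ⟨j, hj, fun j' hj' => ?_, hmin i (Finset.mem_Iic.2 le_rfl)⟩
  exact (hmin j' (Finset.mem_Iic.2 (hj'.le.trans hj))).lt_of_ne (π.injective.ne hj'.ne')

theorem containsPattern_pat132 {i j l : Fin n} (hij : i < j) (hjl : j < l)
    (hil : π i < π l) (hlj : π l < π j) : ContainsPattern π pat132 := by
  refine ⟨![i, j, l], ?_, ?_⟩
  · simp [Fin.strictMono_iff_lt_succ, Fin.forall_fin_succ, hij, hjl]
  · have hπij := hil.trans hlj
    intro a b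
    fin_cases a <;> fin_cases b <;>
      simp [pat132, hil, hlj, hπij, hil.not_gt, hlj.not_gt, hπij.not_gt]

theorem AvoidsPattern.apply_lt_of_le_of_inversion (h : AvoidsPattern π pat132) {i j l : Fin n}
    (hji : j ≤ i) (hil : i < l) (hπ : π l < π i) : π l < π j := by
  rcases hji.eq_or_lt with rfl | hji
  · exact hπ
  · by_contra! hle
    exact h (containsPattern_pat132 hji hil
      (hle.lt_of_ne (π.injective.ne (hji.trans hil).ne)) hπ)

theorem AvoidsPattern.le_card_isLtrMin (h : AvoidsPattern π pat132) {m : ℕ} {f : Fin m → Fin n}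
    (hf : StrictMono f) (hπf : StrictAnti (π ∘ f)) :
    m ≤ Nat.card {i // IsLtrMin π i} := by
  choose g hgf hg hπg using fun a => exists_isLtrMin_le_apply_le π (f a)
  have hg_inj : Function.Injective g := .of_lt_imp_ne fun a b hab hgab =>
    (h.apply_lt_of_le_of_inversion (hgab ▸ hgf a) (hf hab) (hπf hab)).not_ge (hπg b)
  simpa using Nat.card_le_card_of_injective (fun a => (⟨g a, hg a⟩ : {i // IsLtrMin π i}))
    fun a b hab => hg_inj (congrArg Subtype.val hab)

theorem exists_strictAnti_of_le_card_isLtrMin {m : ℕ} (hm : m ≤ Nat.card {i // IsLtrMin π i}) :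
    ∃ f : Fin m → Fin n, StrictMono f ∧ StrictAnti (π ∘ f) := by
  classical
  let s := Finset.univ.filter (IsLtrMin π)
  have hs : m ≤ s.card := by
    rwa [Nat.card_eq_fintype_card, Fintype.card_subtype] at hm
  let f := s.orderEmbOfCardLe hs
  have hf : ∀ a, IsLtrMin π (f a) := fun a => (Finset.mem_filter.1 (s.orderEmbOfCardLe_mem hs a)).2
  exact ⟨f, f.strictMono, fun a b hab => hf b (f a) (f.strictMono hab)⟩

theorem decreasing_subseq_iff_ltr_minima_general (n k : ℕ)
    (π : Equiv.Perm (Fin n)) (h : AvoidsPattern π pat132) :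
    (∃ f : Fin (k+1) → Fin n, StrictMono f ∧
        ∀ a b : Fin (k+1), a < b → π (f b) < π (f a)) ↔
      k + 1 ≤ Nat.card {i : Fin n // IsLtrMin π i} :=
  ⟨fun ⟨_, hf, hπf⟩ => h.le_card_isLtrMin hf hπf, exists_strictAnti_of_le_card_isLtrMin⟩

/-- A 132-avoiding permutation contains a strictly decreasing subsequence of
length `k+1` if and only if it has at least `k+1` left-to-right minima. -/
theorem decreasing_subseq_iff_ltr_minima (n k : ℕ) (hk : 1 ≤ k)
    (π : Equiv.Perm (Fin n)) (h : AvoidsPattern π pat132) :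
    (∃ f : Fin (k+1) → Fin n, StrictMono f ∧
        ∀ a b : Fin (k+1), a < b → π (f b) < π (f a)) ↔
      k + 1 ≤ Nat.card {i : Fin n // IsLtrMin π i} :=
  decreasing_subseq_iff_ltr_minima_general n k π h
end

section
/- For every n ≥ 1, the number of Dyck words of semilength n that have exactly three peaks and whose unique decomposition U^{a1}D^{b1}U^{a2}D^{b2}U^{a3}D^{b3} (with all exponents positive) satisfies a2 = 1 or b2 = 1 equals the sum of k² for k from 1 to n−2 (this count is 0 when n ≤ 2). -/
section ThreePeakAux
open List

lemma np_false (l : List Bool) : numPeaks (false :: l) = numPeaks l := by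
  cases l <;> simp [numPeaks]
lemma np_tt (l : List Bool) : numPeaks (true :: true :: l) = numPeaks (true :: l) := by
  simp [numPeaks]
lemma np_tf (l : List Bool) : numPeaks (true :: false :: l) = numPeaks (false :: l) + 1 := by
  cases l <;> simp [numPeaks]
lemma np_repF (b : ℕ) (l : List Bool) :
    numPeaks (replicate b false ++ l) = numPeaks l := by
  induction b with
  | zero => simp
  | succ k ih => simpa [List.replicate_succ, np_false] using ih
lemma np_upDown (a b : ℕ) (ha : 0 < a) (hb : 0 < b) (l : List Bool) :
    numPeaks (upDown a b ++ l) = numPeaks l + 1 := by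
  induction a with
  | zero => omega
  | succ k ih =>
    rcases Nat.eq_zero_or_pos k with hk | hk
    · subst hk
      obtain ⟨c, rfl⟩ : ∃ c, b = c + 1 := ⟨b - 1, by omega⟩
      simp only [upDown, List.replicate_succ, List.replicate_zero, List.nil_append,
        List.cons_append, List.append_assoc]
      rw [np_tf, np_false, np_repF]
    · have := ih hk
      simp only [upDown, List.replicate_succ, List.cons_append, List.append_assoc] at this ⊢
      obtain ⟨c, rfl⟩ : ∃ c, k = c + 1 := ⟨k - 1, by omega⟩
      simp only [List.replicate_succ, List.cons_append] at this ⊢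
      rw [np_tt, this]

def toW (a₁ b₁ a₂ b₂ a₃ b₃ : ℕ) : List Bool :=
  upDown a₁ b₁ ++ upDown a₂ b₂ ++ upDown a₃ b₃

lemma np_toW (a₁ b₁ a₂ b₂ a₃ b₃ : ℕ) (h₁ : 0 < a₁) (h₂ : 0 < b₁) (h₃ : 0 < a₂)
    (h₄ : 0 < b₂) (h₅ : 0 < a₃) (h₆ : 0 < b₃) :
    numPeaks (toW a₁ b₁ a₂ b₂ a₃ b₃) = 3 := by
  have e3 : numPeaks (upDown a₃ b₃) = 1 := by
    rw [← List.append_nil (upDown a₃ b₃), np_upDown _ _ h₅ h₆]; rfl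
  rw [toW, List.append_assoc, np_upDown _ _ h₁ h₂, np_upDown _ _ h₃ h₄, e3]

lemma count_toW_true (a₁ b₁ a₂ b₂ a₃ b₃ : ℕ) :
    (toW a₁ b₁ a₂ b₂ a₃ b₃).count true = a₁ + a₂ + a₃ := by
  simp [toW, upDown, List.count_append, List.count_replicate]; ring
lemma count_toW_false (a₁ b₁ a₂ b₂ a₃ b₃ : ℕ) :
    (toW a₁ b₁ a₂ b₂ a₃ b₃).count false = b₁ + b₂ + b₃ := by
  simp [toW, upDown, List.count_append, List.count_replicate]; ring
lemma count_take_toW (a₁ b₁ a₂ b₂ a₃ b₃ k : ℕ) :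
    ((toW a₁ b₁ a₂ b₂ a₃ b₃).take k).count false =
      min (k - a₁) b₁ + min (k - a₁ - b₁ - a₂) b₂ + min (k - a₁ - b₁ - a₂ - b₂ - a₃) b₃ ∧
    ((toW a₁ b₁ a₂ b₂ a₃ b₃).take k).count true =
      min k a₁ + min (k - a₁ - b₁) a₂ + min (k - a₁ - b₁ - a₂ - b₂) a₃ := by
  constructor <;>
  · simp [toW, upDown, List.take_append, List.take_replicate,
      List.count_append, List.count_replicate, List.length_replicate, List.length_append]
    omega

lemma rep_inj_s5 (x : Bool) : ∀ a a' (l l' : List Bool),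
    replicate a x ++ (!x) :: l = replicate a' x ++ (!x) :: l' → a = a' ∧ l = l' := by
  intro a
  induction a with
  | zero =>
    intro a' l l' h
    cases a' with
    | zero => simpa using h
    | succ k => simp [List.replicate_succ] at h
  | succ k ih =>
    intro a' l l' h
    cases a' with
    | zero => simp [List.replicate_succ] at h
    | succ m =>
      simp only [List.replicate_succ, List.cons_append, List.cons.injEq] at h
      obtain ⟨h1, h2⟩ := ih m l l' h.2
      exact ⟨by omega, h2⟩

lemma repT_inj (a a' : ℕ) (l l' : List Bool)
    (h : replicate a true ++ false :: l = replicate a' true ++ false :: l') :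
    a = a' ∧ l = l' := rep_inj_s5 true a a' l l' (by simpa using h)
lemma repF_inj (a a' : ℕ) (l l' : List Bool)
    (h : replicate a false ++ true :: l = replicate a' false ++ true :: l') :
    a = a' ∧ l = l' := rep_inj_s5 false a a' l l' (by simpa using h)

lemma toW_nf (a₁ c₁ d₂ c₂ d₃ c₃ : ℕ) :
    toW a₁ (c₁+1) (d₂+1) (c₂+1) (d₃+1) (c₃+1) =
      replicate a₁ true ++ false :: (replicate c₁ false ++ true :: (replicate d₂ true ++
        false :: (replicate c₂ false ++ true :: (replicate d₃ true ++
        false :: replicate c₃ false)))) := by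
  simp [toW, upDown, List.replicate_succ, List.append_assoc]

lemma toW_inj {a₁ b₁ a₂ b₂ a₃ b₃ a₁' b₁' a₂' b₂' a₃' b₃' : ℕ}
    (h₂ : 0 < b₁) (h₃ : 0 < a₂) (h₄ : 0 < b₂) (h₅ : 0 < a₃) (h₆ : 0 < b₃)
    (h₂' : 0 < b₁') (h₃' : 0 < a₂') (h₄' : 0 < b₂') (h₅' : 0 < a₃') (h₆' : 0 < b₃')
    (heq : toW a₁ b₁ a₂ b₂ a₃ b₃ = toW a₁' b₁' a₂' b₂' a₃' b₃') :
    a₁ = a₁' ∧ b₁ = b₁' ∧ a₂ = a₂' ∧ b₂ = b₂' ∧ a₃ = a₃' ∧ b₃ = b₃' := by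
  obtain ⟨c₁, rfl⟩ : ∃ c, b₁ = c + 1 := ⟨b₁ - 1, by omega⟩
  obtain ⟨d₂, rfl⟩ : ∃ c, a₂ = c + 1 := ⟨a₂ - 1, by omega⟩
  obtain ⟨c₂, rfl⟩ : ∃ c, b₂ = c + 1 := ⟨b₂ - 1, by omega⟩
  obtain ⟨d₃, rfl⟩ : ∃ c, a₃ = c + 1 := ⟨a₃ - 1, by omega⟩
  obtain ⟨c₃, rfl⟩ : ∃ c, b₃ = c + 1 := ⟨b₃ - 1, by omega⟩
  obtain ⟨c₁', rfl⟩ : ∃ c, b₁' = c + 1 := ⟨b₁' - 1, by omega⟩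
  obtain ⟨d₂', rfl⟩ : ∃ c, a₂' = c + 1 := ⟨a₂' - 1, by omega⟩
  obtain ⟨c₂', rfl⟩ : ∃ c, b₂' = c + 1 := ⟨b₂' - 1, by omega⟩
  obtain ⟨d₃', rfl⟩ : ∃ c, a₃' = c + 1 := ⟨a₃' - 1, by omega⟩
  obtain ⟨c₃', rfl⟩ : ∃ c, b₃' = c + 1 := ⟨b₃' - 1, by omega⟩
  rw [toW_nf, toW_nf] at heq
  obtain ⟨e1, heq⟩ := repT_inj _ _ _ _ heq
  obtain ⟨e2, heq⟩ := repF_inj _ _ _ _ heq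
  obtain ⟨e3, heq⟩ := repT_inj _ _ _ _ heq
  obtain ⟨e4, heq⟩ := repF_inj _ _ _ _ heq
  obtain ⟨e5, heq⟩ := repT_inj _ _ _ _ heq
  have e6 : c₃ = c₃' := by
    have := congrArg List.length heq; simpa using this
  omega

def Q (n : ℕ) (t : ℕ × ℕ × ℕ × ℕ × ℕ × ℕ) : Prop :=
  0 < t.1 ∧ 0 < t.2.1 ∧ 0 < t.2.2.1 ∧ 0 < t.2.2.2.1 ∧ 0 < t.2.2.2.2.1 ∧ 0 < t.2.2.2.2.2 ∧
  t.1 + t.2.2.1 + t.2.2.2.2.1 = n ∧ t.2.1 + t.2.2.2.1 + t.2.2.2.2.2 = n ∧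
  t.2.1 ≤ t.1 ∧ t.2.1 + t.2.2.2.1 ≤ t.1 + t.2.2.1 ∧ (t.2.2.1 = 1 ∨ t.2.2.2.1 = 1)

def S' (n : ℕ) : Finset (ℕ × ℕ × ℕ) :=
  (Finset.Icc 1 (n-2)).biUnion
    (fun k => ({k} : Finset ℕ) ×ˢ (Finset.range k ×ˢ Finset.range k))

lemma mem_S' (n : ℕ) (x : ℕ × ℕ × ℕ) :
    x ∈ S' n ↔ 1 ≤ x.1 ∧ x.1 ≤ n - 2 ∧ x.2.1 < x.1 ∧ x.2.2 < x.1 := by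
  simp only [S', Finset.mem_biUnion, Finset.mem_Icc, Finset.mem_product,
    Finset.mem_singleton, Finset.mem_range]
  constructor
  · rintro ⟨k, ⟨hk1, hk2⟩, h1, h2, h3⟩; omega
  · rintro ⟨h1, h2, h3, h4⟩; exact ⟨x.1, ⟨h1, h2⟩, rfl, h3, h4⟩

lemma card_S' (n : ℕ) : (S' n).card = ∑ k ∈ Finset.Icc 1 (n - 2), k ^ 2 := by
  rw [S', Finset.card_biUnion]
  · exact Finset.sum_congr rfl fun k _ => by
      simp [Finset.card_product, sq]
  · intro k _ k' _ hne
    rw [Function.onFun, Finset.disjoint_left]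
    intro a ha ha'
    simp only [Finset.mem_product, Finset.mem_singleton] at ha ha'
    exact hne (ha.1 ▸ ha'.1 ▸ rfl)

def toIdx (t : ℕ × ℕ × ℕ × ℕ × ℕ × ℕ) : ℕ × ℕ × ℕ :=
  if t.2.2.1 = 1 then (t.1, t.2.1 - 1, t.2.2.2.1 - 1)
  else (t.1 + t.2.2.1 - 1, t.1, t.1 + t.2.2.1 - 1 - t.2.1)

def fromIdx (n : ℕ) (x : ℕ × ℕ × ℕ) : ℕ × ℕ × ℕ × ℕ × ℕ × ℕ :=
  if x.2.1 + x.2.2 < x.1 then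
    (x.1, x.2.1 + 1, 1, x.2.2 + 1, n - 1 - x.1, n - x.2.1 - x.2.2 - 2)
  else (x.2.1, x.1 - x.2.2, x.1 + 1 - x.2.1, 1, n - x.1 - 1, n - 1 - (x.1 - x.2.2))

lemma toIdx_mem {n : ℕ} {t : ℕ × ℕ × ℕ × ℕ × ℕ × ℕ} (hq : Q n t) : toIdx t ∈ S' n := by
  obtain ⟨a1, b1, a2, b2, a3, b3⟩ := t
  obtain ⟨p1, p2, p3, p4, p5, p6, s1, s2, i1, i2, hm⟩ := hq
  rw [mem_S']
  simp only [toIdx]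
  split_ifs with h <;> dsimp only at * <;> omega

lemma fromIdx_Q {n : ℕ} {x : ℕ × ℕ × ℕ} (hx : x ∈ S' n) : Q n (fromIdx n x) := by
  obtain ⟨k, i, j⟩ := x
  rw [mem_S'] at hx
  dsimp only at hx
  simp only [fromIdx, Q]
  split_ifs with h <;> dsimp only at * <;> omega

lemma left_inv' {n : ℕ} {t : ℕ × ℕ × ℕ × ℕ × ℕ × ℕ} (hq : Q n t) :
    fromIdx n (toIdx t) = t := by
  obtain ⟨a1, b1, a2, b2, a3, b3⟩ := t
  obtain ⟨p1, p2, p3, p4, p5, p6, s1, s2, i1, i2, hm⟩ := hq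
  simp only [toIdx, fromIdx]
  split_ifs with h1 h2 h3 <;> simp only [Prod.mk.injEq, true_and, and_true] <;> dsimp only at * <;> omega

lemma right_inv' {n : ℕ} {x : ℕ × ℕ × ℕ} (hx : x ∈ S' n) :
    toIdx (fromIdx n x) = x := by
  obtain ⟨k, i, j⟩ := x
  rw [mem_S'] at hx
  dsimp only at hx
  simp only [toIdx, fromIdx]
  split_ifs with h1 h2 h3 <;> simp only [Prod.mk.injEq, true_and, and_true] <;> dsimp only at * <;> omega

lemma props_toW {n : ℕ} {t : ℕ × ℕ × ℕ × ℕ × ℕ × ℕ} (hq : Q n t) :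
    IsDyckWord n (toW t.1 t.2.1 t.2.2.1 t.2.2.2.1 t.2.2.2.2.1 t.2.2.2.2.2) ∧
      ThreePeakMiddleOne (toW t.1 t.2.1 t.2.2.1 t.2.2.2.1 t.2.2.2.2.1 t.2.2.2.2.2) := by
  obtain ⟨a1, b1, a2, b2, a3, b3⟩ := t
  obtain ⟨p1, p2, p3, p4, p5, p6, s1, s2, i1, i2, hm⟩ := hq
  dsimp only at *
  refine ⟨⟨?_, ?_, ?_⟩, ?_, a1, b1, a2, b2, a3, b3, p1, p2, p3, p4, p5, p6, rfl, hm⟩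
  · rw [count_toW_true]; omega
  · rw [count_toW_false]; omega
  · intro k
    rw [(count_take_toW a1 b1 a2 b2 a3 b3 k).1, (count_take_toW a1 b1 a2 b2 a3 b3 k).2]
    omega
  · exact np_toW a1 b1 a2 b2 a3 b3 p1 p2 p3 p4 p5 p6

end ThreePeakAux

/-- For every `n ≥ 1`, the number of Dyck words of semilength `n` with exactly
three peaks whose unique decomposition `U^{a₁}D^{b₁}U^{a₂}D^{b₂}U^{a₃}D^{b₃}` satisfies
`a₂ = 1` or `b₂ = 1` equals `∑_{k=1}^{n-2} k²`. -/
theorem three_peak_middle_one_count (n : ℕ) (hn : 1 ≤ n) :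
    Nat.card {w : List Bool // IsDyckWord n w ∧ ThreePeakMiddleOne w} =
      ∑ k ∈ Finset.Icc 1 (n - 2), k ^ 2 := by
  classical
  set F : {t : ℕ × ℕ × ℕ × ℕ × ℕ × ℕ // Q n t} →
      {w : List Bool // IsDyckWord n w ∧ ThreePeakMiddleOne w} :=
    fun t => ⟨toW t.1.1 t.1.2.1 t.1.2.2.1 t.1.2.2.2.1 t.1.2.2.2.2.1 t.1.2.2.2.2.2,
      props_toW t.2⟩ with hF
  have hbij : Function.Bijective F := by
    constructor
    · rintro ⟨⟨a1, b1, a2, b2, a3, b3⟩, ht⟩ ⟨⟨a1', b1', a2', b2', a3', b3'⟩, ht'⟩ h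
      obtain ⟨p1, p2, p3, p4, p5, p6, -⟩ := id ht
      obtain ⟨p1', p2', p3', p4', p5', p6', -⟩ := id ht'
      have heq := congrArg Subtype.val h
      change toW a1 b1 a2 b2 a3 b3 = toW a1' b1' a2' b2' a3' b3' at heq
      obtain ⟨e1, e2, e3, e4, e5, e6⟩ :=
        toW_inj p2 p3 p4 p5 p6 p2' p3' p4' p5' p6' heq
      exact Subtype.ext (by dsimp only at *; simp only [Prod.mk.injEq]; omega)
    · rintro ⟨w, hd, hnp, hex⟩
      obtain ⟨a1, b1, a2, b2, a3, b3, p1, p2, p3, p4, p5, p6, hw, hm⟩ := hex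
      have hw' : w = toW a1 b1 a2 b2 a3 b3 := hw
      subst hw'
      have hs1 := hd.1
      have hs2 := hd.2.1
      rw [count_toW_true] at hs1
      rw [count_toW_false] at hs2
      have h1 := hd.2.2 (a1 + b1)
      rw [(count_take_toW a1 b1 a2 b2 a3 b3 (a1 + b1)).1,
        (count_take_toW a1 b1 a2 b2 a3 b3 (a1 + b1)).2] at h1
      have h2 := hd.2.2 (a1 + b1 + a2 + b2)
      rw [(count_take_toW a1 b1 a2 b2 a3 b3 (a1 + b1 + a2 + b2)).1,
        (count_take_toW a1 b1 a2 b2 a3 b3 (a1 + b1 + a2 + b2)).2] at h2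
      refine ⟨⟨(a1, b1, a2, b2, a3, b3), ?_⟩, rfl⟩
      simp only [Q]
      omega
  have hg : Function.Bijective
      (fun x : {x : ℕ × ℕ × ℕ // x ∈ S' n} =>
        (⟨fromIdx n x.1, fromIdx_Q x.2⟩ : {t : ℕ × ℕ × ℕ × ℕ × ℕ × ℕ // Q n t})) := by
    rw [Function.bijective_iff_has_inverse]
    refine ⟨fun t => ⟨toIdx t.1, toIdx_mem t.2⟩, fun x => Subtype.ext (right_inv' x.2),
      fun t => Subtype.ext (left_inv' t.2)⟩
  calc Nat.card {w : List Bool // IsDyckWord n w ∧ ThreePeakMiddleOne w}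
      = Nat.card {t : ℕ × ℕ × ℕ × ℕ × ℕ × ℕ // Q n t} :=
        (Nat.card_congr (Equiv.ofBijective F hbij)).symm
    _ = Nat.card {x : ℕ × ℕ × ℕ // x ∈ S' n} :=
        (Nat.card_congr (Equiv.ofBijective _ hg)).symm
    _ = (S' n).card := Nat.card_eq_finsetCard (S' n)
    _ = ∑ k ∈ Finset.Icc 1 (n - 2), k ^ 2 := card_S' n
end
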